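/- arXiv:1511.07110 — 2 statements merged into one kernel-verified Lean document; each statement's English description precedes it below -/
import Mathlib

section
/- Fix P ≥ 1, widths m^0,…,m^{P−1} ∈ ℕ, constants C1 > 0 and C3^0,…,C3^P > 0, L > 0, and an L-Lipschitz function h : ℝ → ℝ. Define hypothesis classes recursively: F^0 = {x ↦ ⟨w, x⟩ : w ∈ ℝ^d, ‖w‖₂ ≤ C3^0}, and for p = 1,…,P, F^p = {x ↦ Σ_{j=1}^{m^{p−1}} w_j h(f_j(x)) : f_1,…,f_{m^{p−1}} ∈ F^{p−1}, w ∈ ℝ^{m^{p−1}}, ‖w‖₂ ≤ C3^p}. Then for any points x_1,…,x_n ∈ ℝ^d with ‖x_i‖₂ ≤ C1 for all i, the empirical Rademacher complexity satisfies R̂_n(F^P) ≤ (2L)^P C1 C3^0 (Π_{p=1}^{P} √(m^{p−1}) C3^p) / √n + (|h(0)|/√n) Σ_{q=1}^{P} (2L)^{P−q} Π_{p=q}^{P} √(m^{p−1}) C3^p. -/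
open RealInnerProductSpace

/-- (One-sided) empirical Rademacher complexity
`R̂_n(F) = 2^{-n} Σ_{σ ∈ {−1,1}^n} sup_{f ∈ F} (1/n) Σ_i σ_i f (x i)`. -/
noncomputable def radEmp {α : Type*} {n : ℕ} (F : Set (α → ℝ)) (x : Fin n → α) : ℝ :=
  (2 ^ n : ℝ)⁻¹ * ∑ σ : Fin n → Bool,
    sSup {r : ℝ | ∃ f ∈ F, r = (n : ℝ)⁻¹ * ∑ i, (if σ i then (1 : ℝ) else -1) * f (x i)}

/-- The recursively defined multi-layer hypothesis classes: `F^0` is the class of linear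
functionals with weight norm at most `C3 0`, and `F^{p+1}` consists of functions
`x ↦ Σ_{j=1}^{m^p} w_j h(f_j(x))` with `f_j ∈ F^p` and `‖w‖₂ ≤ C3 (p+1)`.
Here `msz p` is the width `m^p` of hidden layer `p`. -/
def Fclass (d : ℕ) (msz : ℕ → ℕ) (C3 : ℕ → ℝ) (h : ℝ → ℝ) :
    ℕ → Set (EuclideanSpace ℝ (Fin d) → ℝ)
  | 0 => {f | ∃ w : EuclideanSpace ℝ (Fin d), ‖w‖ ≤ C3 0 ∧ f = fun x => ⟪w, x⟫}
  | p + 1 => {f | ∃ (g : Fin (msz p) → EuclideanSpace ℝ (Fin d) → ℝ)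
      (w : EuclideanSpace ℝ (Fin (msz p))),
      (∀ j, g j ∈ Fclass d msz C3 h p) ∧ ‖w‖ ≤ C3 (p + 1) ∧
      f = fun x => ∑ j, w j * h (g j x)}

/-!
Work with the unnormalised sums `∑_σ sup_f ∑_i σ_i f(x_i)`. For the linear class the supremum
is `C3 0 ‖∑_i σ_i x_i‖`, and orthogonality of the signs gives
`∑_σ ‖∑_i σ_i x_i‖ ≤ 2^n √(∑_i ‖x_i‖²)`. A layer is handled by Cauchy–Schwarz in the weights
(factor `√m C3`), which leaves `sup_g |∑_i σ_i h(g(x_i))|`. After centring `h` at `h 0`, the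
absolute value costs a factor 2 through the symmetry `σ ↦ -σ`, and the Ledoux–Talagrand
contraction principle, proved by flipping one sign at a time, replaces `h` by `L • id`.
Unrolling the resulting linear recursion gives the closed form.
-/

open NNReal

section Rademacher

variable {G : Type*} {n : ℕ}

def boolSign (b : Bool) : ℝ := if b then 1 else -1

@[simp] lemma boolSign_true : boolSign true = 1 := rfl
@[simp] lemma boolSign_false : boolSign false = -1 := rfl
@[simp] lemma boolSign_not (b : Bool) : boolSign (!b) = -boolSign b := by cases b <;> simp
@[simp] lemma abs_boolSign (b : Bool) : |boolSign b| = 1 := by cases b <;> simp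
@[simp] lemma boolSign_mul_self (b : Bool) : boolSign b * boolSign b = 1 := by cases b <;> simp

def flipAt (j : Fin n) : Equiv.Perm (Fin n → Bool) :=
  Equiv.piCongrRight fun i => if i = j then Equiv.boolNot else Equiv.refl Bool

@[simp] lemma flipAt_apply_self (j : Fin n) (σ : Fin n → Bool) : flipAt j σ j = !σ j := by
  simp [flipAt]

lemma flipAt_apply_of_ne {i j : Fin n} (h : i ≠ j) (σ : Fin n → Bool) : flipAt j σ i = σ i := by
  simp [flipAt, h]

def flipAll : Equiv.Perm (Fin n → Bool) := Equiv.piCongrRight fun _ => Equiv.boolNot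

@[simp] lemma flipAll_apply (σ : Fin n → Bool) (i : Fin n) : flipAll σ i = !σ i := rfl

lemma sum_boolSign_mul_boolSign (i j : Fin n) :
    ∑ σ : Fin n → Bool, boolSign (σ i) * boolSign (σ j) = if i = j then 2 ^ n else 0 := by
  split_ifs with hij
  · simp [hij]
  · have := Equiv.sum_comp (flipAt i) fun σ => boolSign (σ i) * boolSign (σ j)
    simp only [flipAt_apply_self, flipAt_apply_of_ne (Ne.symm hij), boolSign_not, neg_mul,
      Finset.sum_neg_distrib] at this
    linarith

section Khintchine

variable {E : Type*} [NormedAddCommGroup E] [InnerProductSpace ℝ E]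

lemma sum_norm_sq_sum_boolSign_smul (y : Fin n → E) :
    ∑ σ : Fin n → Bool, ‖∑ i, boolSign (σ i) • y i‖ ^ 2 = 2 ^ n * ∑ i, ‖y i‖ ^ 2 := by
  simp_rw [← real_inner_self_eq_norm_sq, sum_inner, inner_sum, real_inner_smul_left,
    real_inner_smul_right, ← mul_assoc]
  rw [Finset.sum_comm]
  simp_rw [Finset.sum_comm (γ := Fin n → Bool), ← Finset.sum_mul, sum_boolSign_mul_boolSign,
    ite_mul, zero_mul, Finset.sum_ite_eq, Finset.mem_univ, if_true, Finset.mul_sum]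

lemma sum_norm_sum_boolSign_smul_le (y : Fin n → E) :
    ∑ σ : Fin n → Bool, ‖∑ i, boolSign (σ i) • y i‖ ≤ 2 ^ n * √(∑ i, ‖y i‖ ^ 2) := by
  calc ∑ σ : Fin n → Bool, ‖∑ i, boolSign (σ i) • y i‖
      = ∑ σ : Fin n → Bool, 1 * ‖∑ i, boolSign (σ i) • y i‖ := by simp
    _ ≤ √(∑ _σ : Fin n → Bool, 1 ^ 2) * √(∑ σ : Fin n → Bool, ‖∑ i, boolSign (σ i) • y i‖ ^ 2) :=
      Real.sum_mul_le_sqrt_mul_sqrt _ _ _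
    _ = 2 ^ n * √(∑ i, ‖y i‖ ^ 2) := by
      rw [sum_norm_sq_sum_boolSign_smul, Real.sqrt_mul (by positivity), ← mul_assoc]
      simp [Real.mul_self_sqrt]

end Khintchine

lemma sum_abs_sum_boolSign_le :
    ∑ σ : Fin n → Bool, |∑ i, boolSign (σ i)| ≤ 2 ^ n * √n := by
  simpa using sum_norm_sum_boolSign_smul_le (fun _ : Fin n => (1 : ℝ))

def signedSum (σ : Fin n → Bool) (t : Fin n → ℝ) : ℝ := ∑ i, boolSign (σ i) * t i

lemma signedSum_flipAll (σ : Fin n → Bool) (t : Fin n → ℝ) :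
    signedSum (flipAll σ) t = -signedSum σ t := by
  simp [signedSum, ← Finset.sum_neg_distrib]

lemma signedSum_eq_add_sum_erase (σ : Fin n → Bool) (t : Fin n → ℝ) (j : Fin n) :
    signedSum σ t = boolSign (σ j) * t j + ∑ i ∈ Finset.univ.erase j, boolSign (σ i) * t i :=
  (Finset.add_sum_erase _ _ (Finset.mem_univ j)).symm

lemma signedSum_flipAt (σ : Fin n → Bool) (t : Fin n → ℝ) (j : Fin n) :
    signedSum (flipAt j σ) t =
      -(boolSign (σ j) * t j) + ∑ i ∈ Finset.univ.erase j, boolSign (σ i) * t i := by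
  rw [signedSum_eq_add_sum_erase _ _ j, flipAt_apply_self, boolSign_not, neg_mul]
  congr 1
  refine Finset.sum_congr rfl fun i hi => ?_
  rw [flipAt_apply_of_ne (Finset.ne_of_mem_erase hi)]

lemma abs_signedSum_le (σ : Fin n → Bool) {t : Fin n → ℝ} {B : ℝ} (ht : ∀ i, |t i| ≤ B) :
    |signedSum σ t| ≤ n * B :=
  calc |signedSum σ t| ≤ ∑ i, |boolSign (σ i) * t i| := Finset.abs_sum_le_sum_abs _ _
    _ ≤ ∑ _i : Fin n, B := Finset.sum_le_sum fun i _ => by simpa [abs_mul] using ht i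
    _ = n * B := by simp

lemma bddAbove_abs_signedSum_image (σ : Fin n → Bool) {F : Set G} {u : G → Fin n → ℝ} {B : ℝ}
    (hB : ∀ g ∈ F, ∀ i, |u g i| ≤ B) : BddAbove ((fun g => |signedSum σ (u g)|) '' F) :=
  ⟨n * B, by rintro _ ⟨g, hg, rfl⟩; exact abs_signedSum_le σ (hB g hg)⟩

lemma bddAbove_signedSum_image (σ : Fin n → Bool) {F : Set G} {u : G → Fin n → ℝ} {B : ℝ}
    (hB : ∀ g ∈ F, ∀ i, |u g i| ≤ B) : BddAbove ((fun g => signedSum σ (u g)) '' F) :=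
  ⟨n * B, by rintro _ ⟨g, hg, rfl⟩; exact (abs_le.1 (abs_signedSum_le σ (hB g hg))).2⟩

noncomputable def rademacherSup (F : Set G) (u : G → Fin n → ℝ) (σ : Fin n → Bool) : ℝ :=
  sSup ((fun g => signedSum σ (u g)) '' F)

noncomputable def rademacherSum (F : Set G) (u : G → Fin n → ℝ) : ℝ :=
  ∑ σ, rademacherSup F u σ

lemma rademacherSum_const_mul (F : Set G) (u : G → Fin n → ℝ) {c : ℝ} (hc : 0 ≤ c) :
    rademacherSum F (fun g i => c * u g i) = c * rademacherSum F u := by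
  rw [rademacherSum, rademacherSum, Finset.mul_sum]
  refine Finset.sum_congr rfl fun σ _ => ?_
  rw [rademacherSup, rademacherSup, ← smul_eq_mul, ← Real.sSup_smul_of_nonneg hc,
    ← Set.image_smul, Set.image_image]
  simp [signedSum, Finset.mul_sum, mul_left_comm]

lemma csSup_add_csSup_le {s t : Set ℝ} (hs : s.Nonempty) (ht : t.Nonempty) {M : ℝ}
    (h : ∀ a ∈ s, ∀ b ∈ t, a + b ≤ M) : sSup s + sSup t ≤ M := by
  rw [← le_sub_iff_add_le']
  refine csSup_le ht fun b hb => ?_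
  rw [le_sub_iff_add_le, ← le_sub_iff_add_le']
  exact csSup_le hs fun a ha => le_sub_iff_add_le.2 (h a ha b hb)

lemma sSup_add_sSup_neg_le {F : Set G} (hF : F.Nonempty) {a b c : G → ℝ}
    (hab : ∀ g ∈ F, ∀ g' ∈ F, |a g - a g'| ≤ |b g - b g'|)
    (h₁ : BddAbove ((fun g => b g + c g) '' F)) (h₂ : BddAbove ((fun g => -b g + c g) '' F)) :
    sSup ((fun g => a g + c g) '' F) + sSup ((fun g => -a g + c g) '' F) ≤
      sSup ((fun g => b g + c g) '' F) + sSup ((fun g => -b g + c g) '' F) := by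
  refine csSup_add_csSup_le (hF.image _) (hF.image _) ?_
  -- `a g - a g' ≤ |b g - b g'|`, and either sign of `b g - b g'` is realised by one of the
  -- pairs `(g, g')`, `(g', g)` on the right-hand side.
  rintro _ ⟨g, hg, rfl⟩ _ ⟨g', hg', rfl⟩
  have h₃ := le_csSup h₁ (Set.mem_image_of_mem _ hg)
  have h₄ := le_csSup h₂ (Set.mem_image_of_mem _ hg')
  have h₅ := le_csSup h₁ (Set.mem_image_of_mem _ hg')
  have h₆ := le_csSup h₂ (Set.mem_image_of_mem _ hg)
  have := hab g hg g' hg'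
  simp only at h₃ h₄ h₅ h₆ ⊢
  cases abs_cases (b g - b g') <;> cases abs_cases (a g - a g') <;> linarith

lemma rademacherSum_le_of_coord_contract {F : Set G} (hF : F.Nonempty) {v w : G → Fin n → ℝ} {B : ℝ}
    (hw : ∀ g ∈ F, ∀ i, |w g i| ≤ B) (j : Fin n) (hvw : ∀ g, ∀ i ≠ j, v g i = w g i)
    (hj : ∀ g ∈ F, ∀ g' ∈ F, |v g j - v g' j| ≤ |w g j - w g' j|) :
    rademacherSum F v ≤ rademacherSum F w := by
  have pair : ∀ σ, rademacherSup F v σ + rademacherSup F v (flipAt j σ) ≤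
      rademacherSup F w σ + rademacherSup F w (flipAt j σ) := by
    intro σ
    have hrest : ∀ g, ∑ i ∈ Finset.univ.erase j, boolSign (σ i) * v g i =
        ∑ i ∈ Finset.univ.erase j, boolSign (σ i) * w g i := fun g =>
      Finset.sum_congr rfl fun i hi => by rw [hvw g i (Finset.ne_of_mem_erase hi)]
    have hw₁ := bddAbove_signedSum_image σ hw
    have hw₂ := bddAbove_signedSum_image (flipAt j σ) hw
    simp only [rademacherSup, signedSum_flipAt] at hw₁ hw₂ ⊢
    simp only [signedSum_eq_add_sum_erase _ _ j, hrest] at hw₁ hw₂ ⊢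
    refine sSup_add_sSup_neg_le hF (fun g hg g' hg' => ?_) hw₁ hw₂
    simpa only [← mul_sub, abs_mul, abs_boolSign, one_mul] using hj g hg g' hg'
  have hsum := Finset.sum_le_sum fun σ (_ : σ ∈ Finset.univ) => pair σ
  rw [Finset.sum_add_distrib, Finset.sum_add_distrib,
    Equiv.sum_comp (flipAt j) (rademacherSup F v), Equiv.sum_comp (flipAt j) (rademacherSup F w)]
    at hsum
  rw [rademacherSum, rademacherSum]
  linarith

lemma abs_sub_le_of_lipschitzWith {φ : ℝ → ℝ} {K : ℝ≥0} (hφ : LipschitzWith K φ) (s t : ℝ) :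
    |φ s - φ t| ≤ K * |s - t| := by
  simpa only [Real.dist_eq] using hφ.dist_le_mul s t

lemma abs_sub_apply_zero_le_of_lipschitzWith {φ : ℝ → ℝ} {K : ℝ≥0} (hφ : LipschitzWith K φ)
    {t B : ℝ} (ht : |t| ≤ B) : |φ t - φ 0| ≤ K * B :=
  (sub_zero t ▸ abs_sub_le_of_lipschitzWith hφ t 0).trans
    (mul_le_mul_of_nonneg_left ht K.coe_nonneg)

lemma abs_apply_le_of_lipschitzWith {φ : ℝ → ℝ} {K : ℝ≥0} (hφ : LipschitzWith K φ)
    {t B : ℝ} (ht : |t| ≤ B) : |φ t| ≤ K * B + |φ 0| := by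
  linarith [abs_sub_abs_le_abs_sub (φ t) (φ 0), abs_sub_apply_zero_le_of_lipschitzWith hφ ht]

theorem rademacherSum_comp_le {F : Set G} (hF : F.Nonempty) {u : G → Fin n → ℝ} {B : ℝ}
    (hB : ∀ g ∈ F, ∀ i, |u g i| ≤ B) {φ : ℝ → ℝ} {K : ℝ≥0} (hφ : LipschitzWith K φ) :
    rademacherSum F (fun g i => φ (u g i)) ≤ K * rademacherSum F u := by
  classical
  let mix (s : Finset (Fin n)) (g : G) (i : Fin n) : ℝ := if i ∈ s then φ (u g i) else K * u g i
  have hmix : ∀ s, ∀ g ∈ F, ∀ i, |mix s g i| ≤ K * B + |φ 0| := by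
    intro s g hg i
    simp only [mix]
    split_ifs
    · exact abs_apply_le_of_lipschitzWith hφ (hB g hg i)
    · rw [abs_mul, NNReal.abs_eq]
      linarith [mul_le_mul_of_nonneg_left (hB g hg i) K.coe_nonneg, abs_nonneg (φ 0)]
  have hstep : ∀ s : Finset (Fin n), rademacherSum F (mix s) ≤ rademacherSum F (mix ∅) := by
    intro s
    induction s using Finset.induction_on with
    | empty => exact le_rfl
    | @insert j s hjs ih =>
      refine le_trans (rademacherSum_le_of_coord_contract hF (hmix s) j (fun g i hij => ?_)
        (fun g _ g' _ => ?_)) ih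
      · simp [mix, hij]
      · simpa [mix, hjs, ← mul_sub, abs_mul] using abs_sub_le_of_lipschitzWith hφ _ _
  simpa [mix, rademacherSum_const_mul F u K.coe_nonneg] using hstep Finset.univ

lemma sum_sSup_abs_signedSum_le {F : Set G} {u : G → Fin n → ℝ} {B : ℝ}
    (hB : ∀ g ∈ F, ∀ i, |u g i| ≤ B) {g₀ : G} (hg₀ : g₀ ∈ F) (hu₀ : u g₀ = 0) :
    ∑ σ : Fin n → Bool, sSup ((fun g => |signedSum σ (u g)|) '' F) ≤ 2 * rademacherSum F u := by
  have hnonneg : ∀ σ, 0 ≤ rademacherSup F u σ := fun σ =>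
    le_csSup_of_le (bddAbove_signedSum_image σ hB) ⟨g₀, hg₀, rfl⟩ (by simp [hu₀, signedSum])
  have hpt : ∀ σ, sSup ((fun g => |signedSum σ (u g)|) '' F) ≤
      rademacherSup F u σ + rademacherSup F u (flipAll σ) := by
    intro σ
    refine csSup_le ⟨_, g₀, hg₀, rfl⟩ ?_
    rintro _ ⟨g, hg, rfl⟩
    have h₁ : signedSum σ (u g) ≤ rademacherSup F u σ :=
      le_csSup (bddAbove_signedSum_image σ hB) ⟨g, hg, rfl⟩
    have h₂ : -signedSum σ (u g) ≤ rademacherSup F u (flipAll σ) := by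
      rw [← signedSum_flipAll]
      exact le_csSup (bddAbove_signedSum_image (flipAll σ) hB) ⟨g, hg, rfl⟩
    have := hnonneg σ
    have := hnonneg (flipAll σ)
    show |signedSum σ (u g)| ≤ _
    cases abs_cases (signedSum σ (u g)) <;> linarith
  calc _ ≤ ∑ σ, (rademacherSup F u σ + rademacherSup F u (flipAll σ)) :=
        Finset.sum_le_sum fun σ _ => hpt σ
    _ = 2 * rademacherSum F u := by
      rw [Finset.sum_add_distrib, Equiv.sum_comp flipAll (rademacherSup F u), rademacherSum]
      ring

lemma signedSum_comp_eq_sub_add (σ : Fin n → Bool) (φ : ℝ → ℝ) (t : Fin n → ℝ) :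
    signedSum σ (fun i => φ (t i)) =
      signedSum σ (fun i => φ (t i) - φ 0) + φ 0 * ∑ i, boolSign (σ i) := by
  rw [signedSum, signedSum, Finset.mul_sum, ← Finset.sum_add_distrib]
  exact Finset.sum_congr rfl fun i _ => by ring

theorem sum_sSup_abs_signedSum_comp_le {F : Set G} {u : G → Fin n → ℝ} {B : ℝ}
    (hB : ∀ g ∈ F, ∀ i, |u g i| ≤ B) {g₀ : G} (hg₀ : g₀ ∈ F) (hu₀ : u g₀ = 0)
    {φ : ℝ → ℝ} {K : ℝ≥0} (hφ : LipschitzWith K φ) :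
    ∑ σ : Fin n → Bool, sSup ((fun g => |signedSum σ (fun i => φ (u g i))|) '' F) ≤
      2 * K * rademacherSum F u + |φ 0| * (2 ^ n * √n) := by
  set ψ : ℝ → ℝ := fun t => φ t - φ 0
  have hψ : LipschitzWith K ψ := LipschitzWith.of_dist_le_mul fun s t => by
    simpa [ψ, Real.dist_eq] using abs_sub_le_of_lipschitzWith hφ s t
  have hψB : ∀ g ∈ F, ∀ i, |ψ (u g i)| ≤ K * B := fun g hg i =>
    abs_sub_apply_zero_le_of_lipschitzWith hφ (hB g hg i)
  have hpt : ∀ σ, sSup ((fun g => |signedSum σ (fun i => φ (u g i))|) '' F) ≤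
      sSup ((fun g => |signedSum σ (fun i => ψ (u g i))|) '' F) +
        |φ 0| * |∑ i, boolSign (σ i)| := by
    intro σ
    refine csSup_le ⟨_, g₀, hg₀, rfl⟩ ?_
    rintro _ ⟨g, hg, rfl⟩
    have := le_csSup (bddAbove_abs_signedSum_image σ hψB) ⟨g, hg, rfl⟩
    calc |signedSum σ (fun i => φ (u g i))|
        ≤ |signedSum σ (fun i => ψ (u g i))| + |φ 0| * |∑ i, boolSign (σ i)| := by
          rw [signedSum_comp_eq_sub_add, ← abs_mul]; exact abs_add_le _ _
      _ ≤ _ := by gcongr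
  have hcontr := rademacherSum_comp_le ⟨g₀, hg₀⟩ hB hψ
  calc _ ≤ ∑ σ : Fin n → Bool, (sSup ((fun g => |signedSum σ (fun i => ψ (u g i))|) '' F) +
        |φ 0| * |∑ i, boolSign (σ i)|) := Finset.sum_le_sum fun σ _ => hpt σ
    _ ≤ 2 * rademacherSum F (fun g i => ψ (u g i)) + |φ 0| * (2 ^ n * √n) := by
      rw [Finset.sum_add_distrib, ← Finset.mul_sum]
      gcongr
      · exact sum_sSup_abs_signedSum_le hψB hg₀ (funext fun i => by simp [ψ, hu₀])
      · exact sum_abs_sum_boolSign_le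
    _ ≤ _ := by linarith

end Rademacher

lemma radEmp_eq_rademacherSum {α : Type*} {n : ℕ} (F : Set (α → ℝ)) (x : Fin n → α) :
    radEmp F x = (2 ^ n : ℝ)⁻¹ * ((n : ℝ)⁻¹ * rademacherSum F (fun f i => f (x i))) := by
  rw [radEmp, rademacherSum, Finset.mul_sum _ _ ((n : ℝ)⁻¹)]
  refine congrArg _ (Finset.sum_congr rfl fun σ _ => ?_)
  rw [rademacherSup, ← smul_eq_mul, ← Real.sSup_smul_of_nonneg (by positivity), ← Set.image_smul,
    Set.image_image]
  congr 1
  ext r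
  constructor <;> rintro ⟨f, hf, rfl⟩ <;> exact ⟨f, hf, rfl⟩

lemma rademacherSum_linear_le {E : Type*} [NormedAddCommGroup E] [InnerProductSpace ℝ E] {n : ℕ}
    {C R : ℝ} (hC : 0 ≤ C) (hR : 0 ≤ R) (x : Fin n → E) (hx : ∀ i, ‖x i‖ ≤ R) :
    rademacherSum {f : E → ℝ | ∃ w : E, ‖w‖ ≤ C ∧ f = fun y => ⟪w, y⟫} (fun f i => f (x i)) ≤
      2 ^ n * √n * (R * C) := by
  have hpt : ∀ σ, rademacherSup {f : E → ℝ | ∃ w : E, ‖w‖ ≤ C ∧ f = fun y => ⟪w, y⟫}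
      (fun f i => f (x i)) σ ≤ C * ‖∑ i, boolSign (σ i) • x i‖ := by
    intro σ
    refine csSup_le ⟨_, _, ⟨0, by simpa using hC, rfl⟩, rfl⟩ ?_
    rintro _ ⟨_, ⟨w, hw, rfl⟩, rfl⟩
    calc signedSum σ (fun i => ⟪w, x i⟫) = ⟪w, ∑ i, boolSign (σ i) • x i⟫ := by
          simp [signedSum, inner_sum, real_inner_smul_right]
      _ ≤ ‖w‖ * ‖∑ i, boolSign (σ i) • x i‖ := real_inner_le_norm _ _
      _ ≤ C * ‖∑ i, boolSign (σ i) • x i‖ := mul_le_mul_of_nonneg_right hw (norm_nonneg _)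
  have hx2 : √(∑ i, ‖x i‖ ^ 2) ≤ √n * R := by
    rw [← Real.sqrt_sq hR, ← Real.sqrt_mul (Nat.cast_nonneg n)]
    gcongr
    calc ∑ i, ‖x i‖ ^ 2 ≤ ∑ _i : Fin n, R ^ 2 := Finset.sum_le_sum fun i _ => by gcongr; exact hx i
      _ = n * R ^ 2 := by simp
  calc _ ≤ ∑ σ : Fin n → Bool, C * ‖∑ i, boolSign (σ i) • x i‖ := Finset.sum_le_sum fun σ _ => hpt σ
    _ = C * ∑ σ : Fin n → Bool, ‖∑ i, boolSign (σ i) • x i‖ := (Finset.mul_sum _ _ _).symm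
    _ ≤ C * (2 ^ n * (√n * R)) := by
      gcongr
      exact (sum_norm_sum_boolSign_smul_le x).trans (by gcongr)
    _ = 2 ^ n * √n * (R * C) := by ring

noncomputable def depthBound (c₀ K a : ℝ) (A : ℕ → ℝ) : ℕ → ℝ
  | 0 => c₀
  | p + 1 => A p * (K * depthBound c₀ K a A p + a)

lemma depthBound_eq (c₀ K a : ℝ) (A : ℕ → ℝ) (p : ℕ) :
    depthBound c₀ K a A p = K ^ p * c₀ * ∏ q ∈ Finset.range p, A q +
      a * ∑ q ∈ Finset.range p, K ^ (p - 1 - q) * ∏ r ∈ Finset.Icc q (p - 1), A r := by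
  induction p with
  | zero => simp [depthBound]
  | succ p ih =>
    have hterm : ∀ q ∈ Finset.range p, K ^ (p - q) * ∏ r ∈ Finset.Icc q p, A r =
        K * A p * (K ^ (p - 1 - q) * ∏ r ∈ Finset.Icc q (p - 1), A r) := by
      intro q hq
      have hqp : q < p := Finset.mem_range.mp hq
      have hIcc : Finset.Icc q p = insert p (Finset.Icc q (p - 1)) := by
        ext r; simp only [Finset.mem_Icc, Finset.mem_insert]; omega
      rw [show p - q = p - 1 - q + 1 by omega, pow_succ, hIcc,
        Finset.prod_insert (by simp only [Finset.mem_Icc]; omega)]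
      ring
    rw [depthBound, ih, Finset.prod_range_succ, Finset.sum_range_succ, Nat.add_sub_cancel,
      Finset.sum_congr rfl hterm, ← Finset.mul_sum]
    simp only [Nat.sub_self, pow_zero, Finset.Icc_self, Finset.prod_singleton]
    ring

section Network

variable {d n : ℕ} {msz : ℕ → ℕ} {C3 : ℕ → ℝ} {h : ℝ → ℝ}

lemma zero_mem_Fclass (hC3 : ∀ p, 0 ≤ C3 p) : ∀ p, (fun _ => (0 : ℝ)) ∈ Fclass d msz C3 h p
  | 0 => ⟨0, by simpa using hC3 0, by ext; simp⟩
  | p + 1 => ⟨fun _ _ => 0, 0, fun _ => zero_mem_Fclass hC3 p, by simpa using hC3 (p + 1),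
      by ext; simp⟩

lemma exists_abs_le_of_mem_Fclass {K : ℝ≥0} (hh : LipschitzWith K h) (hC3 : ∀ p, 0 ≤ C3 p)
    (R : ℝ) (p : ℕ) : ∃ B, ∀ f ∈ Fclass d msz C3 h p, ∀ y, ‖y‖ ≤ R → |f y| ≤ B := by
  induction p with
  | zero =>
    refine ⟨C3 0 * R, ?_⟩
    rintro _ ⟨w, hw, rfl⟩ y hy
    exact (abs_real_inner_le_norm w y).trans (mul_le_mul hw hy (norm_nonneg y) (hC3 0))
  | succ p ih =>
    obtain ⟨B, hB⟩ := ih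
    refine ⟨msz p * (C3 (p + 1) * (K * B + |h 0|)), ?_⟩
    rintro _ ⟨g, w, hg, hw, rfl⟩ y hy
    have hterm : ∀ j, |w j * h (g j y)| ≤ C3 (p + 1) * (K * B + |h 0|) := fun j => by
      rw [abs_mul]
      exact mul_le_mul ((PiLp.norm_apply_le w j).trans hw)
        (abs_apply_le_of_lipschitzWith hh (hB (g j) (hg j) y hy)) (abs_nonneg _) (hC3 _)
    calc |∑ j, w j * h (g j y)| ≤ ∑ j, |w j * h (g j y)| := Finset.abs_sum_le_sum_abs _ _
      _ ≤ ∑ _j : Fin (msz p), C3 (p + 1) * (K * B + |h 0|) := Finset.sum_le_sum fun j _ => hterm j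
      _ = msz p * (C3 (p + 1) * (K * B + |h 0|)) := by simp

lemma rademacherSup_Fclass_succ_le (hC3 : ∀ p, 0 ≤ C3 p) (x : Fin n → EuclideanSpace ℝ (Fin d))
    (p : ℕ) (σ : Fin n → Bool) {B : ℝ} (hB : ∀ g ∈ Fclass d msz C3 h p, ∀ i, |h (g (x i))| ≤ B) :
    rademacherSup (Fclass d msz C3 h (p + 1)) (fun f i => f (x i)) σ ≤
      √(msz p) * C3 (p + 1) *
        sSup ((fun g => |signedSum σ (fun i => h (g (x i)))|) '' Fclass d msz C3 h p) := by
  set D := sSup ((fun g => |signedSum σ (fun i => h (g (x i)))|) '' Fclass d msz C3 h p)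
  have hD : ∀ g ∈ Fclass d msz C3 h p, |signedSum σ (fun i => h (g (x i)))| ≤ D := fun g hg =>
    le_csSup (bddAbove_abs_signedSum_image σ hB) ⟨g, hg, rfl⟩
  have hD₀ : 0 ≤ D := (abs_nonneg _).trans (hD _ (zero_mem_Fclass hC3 p))
  refine csSup_le ⟨_, _, zero_mem_Fclass hC3 (p + 1), rfl⟩ ?_
  rintro _ ⟨_, ⟨g, w, hg, hw, rfl⟩, rfl⟩
  have hw' : √(∑ j, w j ^ 2) ≤ C3 (p + 1) := by simpa [EuclideanSpace.norm_eq] using hw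
  calc signedSum σ (fun i => ∑ j, w j * h (g j (x i)))
      = ∑ j, w j * signedSum σ (fun i => h (g j (x i))) := by
        simp only [signedSum, Finset.mul_sum]
        rw [Finset.sum_comm]
        exact Finset.sum_congr rfl fun j _ => Finset.sum_congr rfl fun i _ => by ring
    _ ≤ √(∑ j, w j ^ 2) * √(∑ j, signedSum σ (fun i => h (g j (x i))) ^ 2) :=
        Real.sum_mul_le_sqrt_mul_sqrt _ _ _
    _ ≤ C3 (p + 1) * √(∑ _j : Fin (msz p), D ^ 2) :=
        mul_le_mul hw' (Real.sqrt_le_sqrt (Finset.sum_le_sum fun j _ =>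
          sq_le_sq' (abs_le.1 (hD _ (hg j))).1 (abs_le.1 (hD _ (hg j))).2))
          (Real.sqrt_nonneg _) (hC3 _)
    _ = √(msz p) * C3 (p + 1) * D := by
        simp [Real.sqrt_mul (Nat.cast_nonneg _), Real.sqrt_sq hD₀]
        ring

lemma rademacherSum_Fclass_succ_le {K : ℝ≥0} (hh : LipschitzWith K h) (hC3 : ∀ p, 0 ≤ C3 p)
    {R : ℝ} (x : Fin n → EuclideanSpace ℝ (Fin d)) (hx : ∀ i, ‖x i‖ ≤ R) (p : ℕ) :
    rademacherSum (Fclass d msz C3 h (p + 1)) (fun f i => f (x i)) ≤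
      √(msz p) * C3 (p + 1) *
        (2 * K * rademacherSum (Fclass d msz C3 h p) (fun f i => f (x i)) +
          |h 0| * (2 ^ n * √n)) := by
  obtain ⟨B, hB⟩ := exists_abs_le_of_mem_Fclass hh hC3 R p (msz := msz)
  have hBx : ∀ g ∈ Fclass d msz C3 h p, ∀ i, |g (x i)| ≤ B := fun g hg i => hB g hg (x i) (hx i)
  calc _ ≤ ∑ σ : Fin n → Bool, √(msz p) * C3 (p + 1) *
        sSup ((fun g => |signedSum σ (fun i => h (g (x i)))|) '' Fclass d msz C3 h p) :=
        Finset.sum_le_sum fun σ _ => rademacherSup_Fclass_succ_le hC3 x p σ fun g hg i =>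
          abs_apply_le_of_lipschitzWith hh (hBx g hg i)
    _ ≤ _ := by
      rw [← Finset.mul_sum]
      have := hC3 (p + 1)
      gcongr
      exact sum_sSup_abs_signedSum_comp_le hBx (zero_mem_Fclass hC3 p) rfl hh

lemma rademacherSum_Fclass_le {K : ℝ≥0} (hh : LipschitzWith K h) (hC3 : ∀ p, 0 ≤ C3 p)
    {R : ℝ} (hR : 0 ≤ R) (x : Fin n → EuclideanSpace ℝ (Fin d)) (hx : ∀ i, ‖x i‖ ≤ R) (p : ℕ) :
    rademacherSum (Fclass d msz C3 h p) (fun f i => f (x i)) ≤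
      2 ^ n * √n * depthBound (R * C3 0) (2 * K) |h 0| (fun q => √(msz q) * C3 (q + 1)) p := by
  induction p with
  | zero => exact rademacherSum_linear_le (hC3 0) hR x hx
  | succ p ih =>
    have := hC3 (p + 1)
    calc _ ≤ _ := rademacherSum_Fclass_succ_le hh hC3 x hx p
      _ ≤ √(msz p) * C3 (p + 1) * (2 * K * (2 ^ n * √n *
            depthBound (R * C3 0) (2 * K) |h 0| (fun q => √(msz q) * C3 (q + 1)) p) +
            |h 0| * (2 ^ n * √n)) := by gcongr
      _ = _ := by rw [depthBound]; ring

end Network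

theorem stmt_9_general {d n : ℕ} (P : ℕ) (msz : ℕ → ℕ)
    (C1 : ℝ) (hC1 : 0 < C1) (C3 : ℕ → ℝ) (hC3 : ∀ p, 0 < C3 p)
    (L : ℝ) (hL : 0 < L) (h : ℝ → ℝ) (hLip : LipschitzWith L.toNNReal h)
    (x : Fin n → EuclideanSpace ℝ (Fin d)) (hx : ∀ i, ‖x i‖ ≤ C1) :
    radEmp (Fclass d msz C3 h P) x ≤
      (2 * L) ^ P * C1 * C3 0 * (∏ p ∈ Finset.range P, Real.sqrt (msz p) * C3 (p + 1))
          / Real.sqrt n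
        + (|h 0| / Real.sqrt n) * ∑ q ∈ Finset.range P,
            (2 * L) ^ (P - 1 - q) *
              ∏ p ∈ Finset.Icc q (P - 1), Real.sqrt (msz p) * C3 (p + 1) := by
  have hsum := rademacherSum_Fclass_le (msz := msz) hLip (fun p => (hC3 p).le) hC1.le x hx P
  rw [Real.coe_toNNReal L hL.le] at hsum
  set b := depthBound (C1 * C3 0) (2 * L) |h 0| (fun q => √(msz q) * C3 (q + 1)) P with hb
  have hscale : (2 ^ n : ℝ)⁻¹ * ((n : ℝ)⁻¹ * (2 ^ n * √n * b)) = b / √n := by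
    rw [show (2 ^ n : ℝ)⁻¹ * ((n : ℝ)⁻¹ * (2 ^ n * √n * b)) = (2 ^ n : ℝ)⁻¹ * 2 ^ n * (√n / n) * b
      by ring, inv_mul_cancel₀ (by positivity), Real.sqrt_div_self']
    ring
  calc radEmp (Fclass d msz C3 h P) x
      = (2 ^ n : ℝ)⁻¹ * ((n : ℝ)⁻¹ * rademacherSum (Fclass d msz C3 h P) fun f i => f (x i)) :=
        radEmp_eq_rademacherSum _ _
    _ ≤ b / √n := hscale ▸ by gcongr
    _ = _ := by rw [hb, depthBound_eq]; ring

/-- paper's Lemma 5. Rademacher complexity bound for the `P`-hidden-layer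
class:
`R̂_n(F^P) ≤ (2L)^P C1 C3^0 Π_{p=1}^P √(m^{p−1}) C3^p / √n
  + (|h(0)|/√n) Σ_{q=1}^P (2L)^{P−q} Π_{p=q}^P √(m^{p−1}) C3^p`. -/
theorem stmt_9 {d n : ℕ} (hn : 0 < n) (P : ℕ) (hP : 1 ≤ P) (msz : ℕ → ℕ)
    (C1 : ℝ) (hC1 : 0 < C1) (C3 : ℕ → ℝ) (hC3 : ∀ p, 0 < C3 p)
    (L : ℝ) (hL : 0 < L) (h : ℝ → ℝ) (hLip : LipschitzWith L.toNNReal h)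
    (x : Fin n → EuclideanSpace ℝ (Fin d)) (hx : ∀ i, ‖x i‖ ≤ C1) :
    radEmp (Fclass d msz C3 h P) x ≤
      (2 * L) ^ P * C1 * C3 0 * (∏ p ∈ Finset.range P, Real.sqrt (msz p) * C3 (p + 1))
          / Real.sqrt n
        + (|h 0| / Real.sqrt n) * ∑ q ∈ Finset.range P,
            (2 * L) ^ (P - 1 - q) *
              ∏ p ∈ Finset.Icc q (P - 1), Real.sqrt (msz p) * C3 (p + 1) :=
  stmt_9_general P msz C1 hC1 C3 hC3 L hL h hLip x hx
end

section
/- Fix d ≥ 2, θ ∈ (0, π/2), an integer m with m ≤ 2(⌊(π/2 − θ)/θ⌋ + 1), constants C, C1, C3 > 0, and a 1-Lipschitz function h : ℝ → ℝ. Let P be a probability measure on ℝ^d supported in the ball {x : ‖x‖₂ ≤ C1}. Let f'(x) = Σ_{j=1}^m α_j h(⟨w'_j, x⟩) with |α_j| ≤ 2C and w'_j nonzero, ‖w'_j‖₂ ≤ C3 for all j. Then there exist nonzero vectors w_1,…,w_m ∈ ℝ^d with ‖w_j‖₂ = ‖w'_j‖₂ and ρ(w_j, w_k) ≥ θ for all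 j ≠ k such that the function f(x) = Σ_{j=1}^m α_j h(⟨w_j, x⟩) satisfies (∫ (f(x) − f'(x))² dP(x))^{1/2} ≤ 4 m C C1 C3 sin(θ'/2), where θ' = min(3mθ, π). -/
open RealInnerProductSpace MeasureTheory

/-- The nonobtuse angle `ρ(u,v) = arccos(|⟨u,v⟩| / (‖u‖‖v‖))` between two vectors. -/
noncomputable def rho {E : Type*} [NormedAddCommGroup E] [InnerProductSpace ℝ E]
    (u v : E) : ℝ :=
  Real.arccos (|⟪u, v⟫| / (‖u‖ * ‖v‖))

open Real InnerProductGeometry Module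

/-!
Every new weight `w j` is `w' j` rotated inside a 2-plane through it. If `2 m θ ≤ π` the weights
are chosen greedily: the new one is picked among rotations of `w' j` by multiples of `2θ`. These
are pairwise at least `2θ` apart as lines, so by the triangle inequality for the angle between
lines each weight chosen before spoils at most one of them, and one survives; it makes an angle at
most `2 m θ` with `w' j`. Otherwise `sin (θ' / 2) = 1`, and any `θ`-separated family with the
prescribed norms will do, e.g. lines at angles `j θ` in a fixed plane, which fit since `m θ ≤ π`.
In both cases `‖w j - w' j‖ ≤ 2 C3 sin (θ' / 2)`, and the `L²` bound follows from the pointwise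
bound given by the Lipschitz property of `h` on the ball of radius `C1`.
-/

section Angles

variable {E : Type*} [NormedAddCommGroup E] [InnerProductSpace ℝ E]

theorem rho_eq_min_angle (u v : E) : rho u v = min (angle u v) (π - angle u v) := by
  have hdiv : |⟪u, v⟫| / (‖u‖ * ‖v‖) = |⟪u, v⟫ / (‖u‖ * ‖v‖)| := by
    rw [abs_div, abs_of_nonneg (by positivity : (0 : ℝ) ≤ ‖u‖ * ‖v‖)]
  rw [rho, angle, hdiv, abs_eq_max_neg, antitone_arccos.map_max, arccos_neg]

theorem rho_comm (u v : E) : rho u v = rho v u := by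
  simp only [rho_eq_min_angle, angle_comm u v]

theorem rho_smul_smul_of_pos {a b : ℝ} (ha : 0 < a) (hb : 0 < b) (u v : E) :
    rho (a • u) (b • v) = rho u v := by
  simp only [rho_eq_min_angle, angle_smul_left_of_pos _ _ ha, angle_smul_right_of_pos _ _ hb]

/-- `rho` is the angle between the lines `ℝ u` and `ℝ v`; the triangle inequality for it follows
from the one for `angle`, applied to `u`, `±v`, `±w`. -/
theorem rho_le_rho_add_rho (u v w : E) : rho u w ≤ rho u v + rho v w := by
  have h₁ := angle_le_angle_add_angle u v w
  have h₂ := angle_le_angle_add_angle u v (-w)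
  have h₃ := angle_le_angle_add_angle u (-v) w
  have h₄ := angle_le_angle_add_angle u (-v) (-w)
  simp only [angle_neg_right, angle_neg_left] at h₂ h₃ h₄
  simp only [rho_eq_min_angle, min_def]
  split_ifs <;> linarith

end Angles

section Rotated

variable {E : Type*} [NormedAddCommGroup E] [InnerProductSpace ℝ E]

noncomputable def rotated (u e : E) (t : ℝ) : E := cos t • u + sin t • e

variable {u e : E}

theorem inner_rotated_rotated (hu : ‖u‖ = 1) (he : ‖e‖ = 1) (hue : ⟪u, e⟫ = 0) (s t : ℝ) :
    ⟪rotated u e s, rotated u e t⟫ = cos (s - t) := by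
  have hu' : ⟪u, u⟫ = 1 := by rw [real_inner_self_eq_norm_sq, hu, one_pow]
  have he' : ⟪e, e⟫ = 1 := by rw [real_inner_self_eq_norm_sq, he, one_pow]
  simp only [rotated, inner_add_left, inner_add_right, real_inner_smul_left,
    real_inner_smul_right, hu', he', hue, real_inner_comm u e, cos_sub]
  ring

theorem norm_rotated (hu : ‖u‖ = 1) (he : ‖e‖ = 1) (hue : ⟪u, e⟫ = 0) (t : ℝ) :
    ‖rotated u e t‖ = 1 := by
  have h := inner_rotated_rotated hu he hue t t
  rw [sub_self, cos_zero, real_inner_self_eq_norm_sq] at h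
  exact (pow_eq_one_iff_of_nonneg (norm_nonneg _) two_ne_zero).1 h

theorem rotated_zero (u e : E) : rotated u e 0 = u := by
  simp [rotated]

theorem angle_rotated_rotated (hu : ‖u‖ = 1) (he : ‖e‖ = 1) (hue : ⟪u, e⟫ = 0) {s t : ℝ}
    (hst : |s - t| ≤ π) : angle (rotated u e s) (rotated u e t) = |s - t| := by
  rw [angle, inner_rotated_rotated hu he hue, norm_rotated hu he hue, norm_rotated hu he hue,
    mul_one, div_one, ← cos_abs, arccos_cos (abs_nonneg _) hst]

theorem angle_rotated_self (hu : ‖u‖ = 1) (he : ‖e‖ = 1) (hue : ⟪u, e⟫ = 0) {t : ℝ}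
    (ht : |t| ≤ π) : angle (rotated u e t) u = |t| := by
  have h := angle_rotated_rotated hu he hue (s := t) (t := 0) (by rwa [sub_zero])
  rwa [rotated_zero, sub_zero] at h

theorem rho_rotated_rotated (hu : ‖u‖ = 1) (he : ‖e‖ = 1) (hue : ⟪u, e⟫ = 0) {s t : ℝ}
    (hst : |s - t| ≤ π) : rho (rotated u e s) (rotated u e t) = min |s - t| (π - |s - t|) := by
  rw [rho_eq_min_angle, angle_rotated_rotated hu he hue hst]

theorem le_rho_smul_rotated_mul (hu : ‖u‖ = 1) (he : ‖e‖ = 1) (hue : ⟪u, e⟫ = 0) {m : ℕ}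
    {δ : ℝ} (hδ : 0 ≤ δ) (hmδ : m * δ ≤ π) {a b : ℝ} (ha : 0 < a) (hb : 0 < b) {k l : Fin m}
    (hkl : k ≠ l) : δ ≤ rho (a • rotated u e (k * δ)) (b • rotated u e (l * δ)) := by
  have hgap : 1 ≤ |(k : ℝ) - l| ∧ |(k : ℝ) - l| + 1 ≤ m := by
    have hk : (k : ℝ) + 1 ≤ m := by exact_mod_cast k.isLt
    have hl : (l : ℝ) + 1 ≤ m := by exact_mod_cast l.isLt
    have hk₀ : (0 : ℝ) ≤ k := Nat.cast_nonneg _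
    have hl₀ : (0 : ℝ) ≤ l := Nat.cast_nonneg _
    rcases Nat.lt_or_gt_of_ne (Fin.val_ne_of_ne hkl) with h | h
    · have h' : (k : ℝ) + 1 ≤ l := by exact_mod_cast h
      rw [abs_of_neg (by linarith)]
      constructor <;> linarith
    · have h' : (l : ℝ) + 1 ≤ k := by exact_mod_cast h
      rw [abs_of_pos (by linarith)]
      constructor <;> linarith
  have hdist : |(k : ℝ) * δ - l * δ| = |(k : ℝ) - l| * δ := by
    rw [← sub_mul, abs_mul, abs_of_nonneg hδ]
  rw [rho_smul_smul_of_pos ha hb, rho_rotated_rotated hu he hue (by nlinarith), hdist]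
  exact le_min (by nlinarith) (by nlinarith)

end Rotated

section Construction

variable {E : Type*} [NormedAddCommGroup E] [InnerProductSpace ℝ E]

theorem exists_norm_eq_one_inner_eq_zero [FiniteDimensional ℝ E] (hE : 2 ≤ finrank ℝ E)
    (u : E) : ∃ e : E, ‖e‖ = 1 ∧ ⟪u, e⟫ = 0 := by
  set K : Submodule ℝ E := ℝ ∙ u
  have hK : finrank ℝ K ≤ 1 := by
    simpa using finrank_span_le_card (R := ℝ) ({u} : Set E)
  have hKperp : 0 < finrank ℝ Kᗮ := by
    have := K.finrank_add_finrank_orthogonal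
    omega
  obtain ⟨x, hxK, hx⟩ := Submodule.exists_mem_ne_zero_of_ne_bot
    (Submodule.one_le_finrank_iff.1 hKperp)
  refine ⟨‖x‖⁻¹ • x, norm_smul_inv_norm hx, ?_⟩
  rw [real_inner_smul_right, Submodule.inner_right_of_mem_orthogonal
    (Submodule.mem_span_singleton_self u) hxK, mul_zero]

theorem exists_forall_le_rho_of_card_lt {θ : ℝ} {m n : ℕ} (hnm : n < m) (c : Fin m → E)
    (hc : Pairwise fun k l => 2 * θ ≤ rho (c k) (c l)) (v : Fin n → E) :
    ∃ k, ∀ i, θ ≤ rho (c k) (v i) := by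
  by_contra! hbad
  choose f hf using hbad
  obtain ⟨k, l, hkl, hfkl⟩ := Fintype.exists_ne_map_eq_of_card_lt f (by simpa using hnm)
  have htri := rho_le_rho_add_rho (c k) (v (f l)) (c l)
  rw [rho_comm (v (f l))] at htri
  linarith [hc hkl, hfkl ▸ hf k, hf l]

theorem exists_norm_eq_angle_le_forall_le_rho [FiniteDimensional ℝ E] (hE : 2 ≤ finrank ℝ E)
    {θ : ℝ} (hθ : 0 ≤ θ) {n : ℕ} (hn : 2 * (n + 1) * θ ≤ π) {w₀ : E} (hw₀ : w₀ ≠ 0)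
    (v : Fin n → E) : ∃ x : E, ‖x‖ = ‖w₀‖ ∧ angle x w₀ ≤ 2 * n * θ ∧ ∀ i, θ ≤ rho x (v i) := by
  have hr : 0 < ‖w₀‖ := norm_pos_iff.2 hw₀
  set u := ‖w₀‖⁻¹ • w₀
  have hu : ‖u‖ = 1 := norm_smul_inv_norm hw₀
  have hw₀u : w₀ = ‖w₀‖ • u := (smul_inv_smul₀ hr.ne' w₀).symm
  obtain ⟨e, he, hue⟩ := exists_norm_eq_one_inner_eq_zero hE u
  set c : Fin (n + 1) → E := fun k => ‖w₀‖ • rotated u e (k * (2 * θ))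
  have hc : Pairwise fun k l => 2 * θ ≤ rho (c k) (c l) := fun k l hkl =>
    le_rho_smul_rotated_mul hu he hue (by positivity) (by push_cast; linarith) hr hr hkl
  obtain ⟨k, hk⟩ := exists_forall_le_rho_of_card_lt (Nat.lt_succ_self n) c hc v
  have hkn : (k : ℝ) ≤ n := by exact_mod_cast Nat.lt_succ_iff.1 k.isLt
  have hk₀ : 0 ≤ (k : ℝ) * (2 * θ) := by positivity
  refine ⟨c k, ?_, ?_, hk⟩
  · rw [norm_smul, norm_rotated hu he hue, norm_norm, mul_one]
  · rw [hw₀u, angle_smul_left_of_pos _ _ hr, angle_smul_right_of_pos _ _ hr,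
      angle_rotated_self hu he hue (by rw [abs_of_nonneg hk₀]; nlinarith), abs_of_nonneg hk₀]
    nlinarith

theorem Fin.pairwise_cons {α : Type*} {r : α → α → Prop} (hr : ∀ a b, r a b → r b a) {n : ℕ}
    {x : α} {w : Fin n → α} (hx : ∀ i, r x (w i)) (hw : Pairwise fun i j => r (w i) (w j)) :
    Pairwise fun i j =>
      r ((Fin.cons x w : Fin (n + 1) → α) i) ((Fin.cons x w : Fin (n + 1) → α) j) := by
  intro i j hij
  cases i using Fin.cases <;> cases j using Fin.cases
  · exact absurd rfl hij
  · simpa using hx _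
  · simpa using hr _ _ (hx _)
  · simpa using hw fun h => hij (by rw [h])

theorem exists_pairwise_le_rho_angle_le [FiniteDimensional ℝ E] (hE : 2 ≤ finrank ℝ E)
    {θ : ℝ} (hθ : 0 ≤ θ) :
    ∀ {m : ℕ}, 2 * m * θ ≤ π → ∀ w' : Fin m → E, (∀ j, w' j ≠ 0) →
      ∃ w : Fin m → E, (∀ j, ‖w j‖ = ‖w' j‖) ∧ (Pairwise fun j k => θ ≤ rho (w j) (w k)) ∧
        ∀ j, angle (w j) (w' j) ≤ 2 * m * θ
  | 0, _, w', _ => ⟨w', fun _ => rfl, fun j => j.elim0, fun j => j.elim0⟩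
  | n + 1, hm, w', hw' => by
    push_cast at hm
    obtain ⟨w, hnorm, hsep, hangle⟩ :=
      exists_pairwise_le_rho_angle_le hE hθ (by linarith) (Fin.tail w') fun j => hw' j.succ
    obtain ⟨x, hx, hxangle, hxsep⟩ :=
      exists_norm_eq_angle_le_forall_le_rho hE hθ hm (hw' 0) w
    refine ⟨Fin.cons x w, Fin.cases hx hnorm,
      Fin.pairwise_cons (r := fun a b => θ ≤ rho a b) (fun a b h => by rwa [rho_comm]) hxsep hsep,
      Fin.cases ?_ ?_⟩
    · simp only [Fin.cons_zero]; push_cast; linarith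
    · intro j
      simp only [Fin.cons_succ]
      exact (hangle j).trans (by push_cast; linarith)

theorem exists_pairwise_le_rho_norm_eq [FiniteDimensional ℝ E] (hE : 2 ≤ finrank ℝ E)
    {θ : ℝ} (hθ : 0 ≤ θ) {m : ℕ} (hm : m * θ ≤ π) (r : Fin m → ℝ) (hr : ∀ j, 0 < r j) :
    ∃ w : Fin m → E, (∀ j, ‖w j‖ = r j) ∧ Pairwise fun j k => θ ≤ rho (w j) (w k) := by
  obtain ⟨u, hu, -⟩ := exists_norm_eq_one_inner_eq_zero hE (0 : E)
  obtain ⟨e, he, hue⟩ := exists_norm_eq_one_inner_eq_zero hE u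
  refine ⟨fun j => r j • rotated u e (j * θ), fun j => ?_, fun j k hjk =>
    le_rho_smul_rotated_mul hu he hue hθ hm (hr j) (hr k) hjk⟩
  rw [norm_smul, norm_rotated hu he hue, mul_one, norm_of_nonneg (hr j).le]

theorem exists_pairwise_le_rho_angle_le_min [FiniteDimensional ℝ E] (hE : 2 ≤ finrank ℝ E)
    {θ : ℝ} (hθ : 0 ≤ θ) {m : ℕ} (hm : m * θ ≤ π) (w' : Fin m → E) (hw' : ∀ j, w' j ≠ 0) :
    ∃ w : Fin m → E, (∀ j, ‖w j‖ = ‖w' j‖) ∧ (Pairwise fun j k => θ ≤ rho (w j) (w k)) ∧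
      ∀ j, angle (w j) (w' j) ≤ min (2 * m * θ) π := by
  rcases le_total (2 * m * θ) π with h | h
  · obtain ⟨w, hnorm, hsep, hangle⟩ := exists_pairwise_le_rho_angle_le hE hθ h w' hw'
    exact ⟨w, hnorm, hsep, fun j => (min_eq_left h).symm ▸ hangle j⟩
  · obtain ⟨w, hnorm, hsep⟩ :=
      exists_pairwise_le_rho_norm_eq hE hθ hm _ fun j => norm_pos_iff.2 (hw' j)
    exact ⟨w, hnorm, hsep, fun j => (min_eq_right h).symm ▸ angle_le_pi _ _⟩

end Construction

theorem natCast_mul_le_pi_of_le_floor {θ : ℝ} (hθ : θ ∈ Set.Ioo 0 (π / 2)) {m : ℕ}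
    (hm : m ≤ 2 * (⌊(π / 2 - θ) / θ⌋₊ + 1)) : m * θ ≤ π := by
  obtain ⟨hθ₀, hθπ⟩ := hθ
  have hfloor : (⌊(π / 2 - θ) / θ⌋₊ : ℝ) * θ ≤ π / 2 - θ :=
    (le_div_iff₀ hθ₀).1 (Nat.floor_le (div_nonneg (by linarith) hθ₀.le))
  have hm' : (m : ℝ) ≤ 2 * (⌊(π / 2 - θ) / θ⌋₊ + 1) := by exact_mod_cast hm
  nlinarith

section Estimates

variable {E : Type*} [NormedAddCommGroup E] [InnerProductSpace ℝ E]

theorem norm_sub_le_two_mul_norm_mul_sin_half {x y : E} (hxy : ‖x‖ = ‖y‖) {φ : ℝ}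
    (hφ : angle x y ≤ φ) (hφπ : φ ≤ π) : ‖x - y‖ ≤ 2 * ‖x‖ * sin (φ / 2) := by
  set a := angle x y
  have hsq : ‖x - y‖ ^ 2 = (2 * ‖x‖ * sin (a / 2)) ^ 2 := by
    have hcos : cos a = 1 - 2 * sin (a / 2) ^ 2 := by
      have h := cos_two_mul (a / 2)
      rw [mul_div_cancel₀ a two_ne_zero] at h
      linarith [sin_sq_add_cos_sq (a / 2)]
    rw [sq ‖x - y‖, norm_sub_sq_eq_norm_sq_add_norm_sq_sub_two_mul_norm_mul_norm_mul_cos_angle,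
      ← hxy, hcos]
    ring
  have ha₀ : 0 ≤ sin (a / 2) :=
    sin_nonneg_of_nonneg_of_le_pi (by linarith [angle_nonneg x y])
      (by linarith [angle_le_pi x y, pi_pos])
  have hmono : sin (a / 2) ≤ sin (φ / 2) :=
    sin_le_sin_of_le_of_le_pi_div_two (by linarith [angle_nonneg x y]) (by linarith) (by linarith)
  rw [← abs_of_nonneg (norm_nonneg (x - y)), ← sqrt_sq_eq_abs, hsq,
    sqrt_sq (by positivity)]
  gcongr

theorem abs_sum_mul_sub_sum_mul_le {ι : Type*} [Fintype ι] {h : ℝ → ℝ} (hh : LipschitzWith 1 h)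
    {α : ι → ℝ} {A : ℝ} (hα : ∀ j, |α j| ≤ A) {w w' : ι → E} {δ : ℝ}
    (hw : ∀ j, ‖w j - w' j‖ ≤ δ) {x : E} {R : ℝ} (hx : ‖x‖ ≤ R) :
    |∑ j, α j * h ⟪w j, x⟫ - ∑ j, α j * h ⟪w' j, x⟫| ≤ Fintype.card ι * (A * (δ * R)) := by
  have hterm : ∀ j, |α j * h ⟪w j, x⟫ - α j * h ⟪w' j, x⟫| ≤ A * (δ * R) := fun j => by
    have hlip : |h ⟪w j, x⟫ - h ⟪w' j, x⟫| ≤ ‖w j - w' j‖ * ‖x‖ := by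
      calc |h ⟪w j, x⟫ - h ⟪w' j, x⟫| ≤ |⟪w j, x⟫ - ⟪w' j, x⟫| := by
            simpa [Real.dist_eq] using hh.dist_le_mul ⟪w j, x⟫ ⟪w' j, x⟫
        _ = |⟪w j - w' j, x⟫| := by rw [inner_sub_left]
        _ ≤ ‖w j - w' j‖ * ‖x‖ := abs_real_inner_le_norm _ _
    rw [← mul_sub, abs_mul]
    have hδ : 0 ≤ δ := (norm_nonneg _).trans (hw j)
    have hA : 0 ≤ A := (abs_nonneg _).trans (hα j)
    exact mul_le_mul (hα j) (hlip.trans (mul_le_mul (hw j) hx (norm_nonneg x) hδ))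
      (abs_nonneg _) hA
  rw [← Finset.sum_sub_distrib]
  calc _ ≤ ∑ j, |α j * h ⟪w j, x⟫ - α j * h ⟪w' j, x⟫| := Finset.abs_sum_le_sum_abs _ _
    _ ≤ ∑ _j : ι, A * (δ * R) := Finset.sum_le_sum fun j _ => hterm j
    _ = Fintype.card ι * (A * (δ * R)) := by simp

end Estimates

theorem sqrt_integral_sq_le_of_ae_abs_le {Ω : Type*} [MeasurableSpace Ω] {P : Measure Ω}
    [IsProbabilityMeasure P] {g : Ω → ℝ} {M : ℝ} (hg : ∀ᵐ x ∂P, |g x| ≤ M) :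
    √(∫ x, g x ^ 2 ∂P) ≤ M := by
  obtain ⟨x₀, hx₀⟩ := hg.exists
  have hM : 0 ≤ M := (abs_nonneg _).trans hx₀
  have hint : ∫ x, g x ^ 2 ∂P ≤ M ^ 2 := by
    calc ∫ x, g x ^ 2 ∂P ≤ ∫ _x, M ^ 2 ∂P :=
          integral_mono_of_nonneg (.of_forall fun x => sq_nonneg _) (integrable_const _)
            (hg.mono fun x hx => sq_le_sq' (abs_le.1 hx).1 (abs_le.1 hx).2)
      _ = M ^ 2 := by simp
  exact (sqrt_le_sqrt hint).trans_eq (sqrt_sq hM)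

theorem stmt_18_general {d : ℕ} (hd : 2 ≤ d) (θ : ℝ) (hθ : θ ∈ Set.Ioo 0 (Real.pi / 2))
    (m : ℕ) (hm : m ≤ 2 * (Nat.floor ((Real.pi / 2 - θ) / θ) + 1))
    (C C1 C3 : ℝ)
    (h : ℝ → ℝ) (hLip : LipschitzWith 1 h)
    (P : Measure (EuclideanSpace ℝ (Fin d))) [IsProbabilityMeasure P]
    (hsupp : ∀ᵐ x ∂P, ‖x‖ ≤ C1)
    (α : Fin m → ℝ) (hα : ∀ j, |α j| ≤ 2 * C)
    (w' : Fin m → EuclideanSpace ℝ (Fin d))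
    (hw'ne : ∀ j, w' j ≠ 0) (hw'n : ∀ j, ‖w' j‖ ≤ C3) :
    ∃ w : Fin m → EuclideanSpace ℝ (Fin d),
      (∀ j, w j ≠ 0) ∧
      (∀ j, ‖w j‖ = ‖w' j‖) ∧
      (∀ j k, j ≠ k → θ ≤ rho (w j) (w k)) ∧
      Real.sqrt (∫ x, ((∑ j, α j * h ⟪w j, x⟫) - ∑ j, α j * h ⟪w' j, x⟫) ^ 2 ∂P) ≤
        4 * m * C * C1 * C3 * Real.sin (min (3 * m * θ) Real.pi / 2) := by
  have hE : 2 ≤ finrank ℝ (EuclideanSpace ℝ (Fin d)) := by rwa [finrank_euclideanSpace_fin]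
  obtain ⟨w, hnorm, hsep, hangle⟩ := exists_pairwise_le_rho_angle_le_min hE hθ.1.le
    (natCast_mul_le_pi_of_le_floor hθ hm) w' hw'ne
  refine ⟨w, fun j => norm_ne_zero_iff.1 (hnorm j ▸ norm_ne_zero_iff.2 (hw'ne j)), hnorm,
    fun j k hjk => hsep hjk, ?_⟩
  set φ := min (3 * m * θ) π
  have hφ : φ ≤ π := min_le_right _ _
  have hsin : 0 ≤ sin (φ / 2) :=
    sin_nonneg_of_nonneg_of_le_pi (by positivity [hθ.1.le, pi_pos.le]) (by linarith [pi_pos])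
  have hchord : ∀ j, ‖w j - w' j‖ ≤ 2 * C3 * sin (φ / 2) := fun j => by
    have hwφ : angle (w j) (w' j) ≤ φ :=
      (hangle j).trans (min_le_min_right _ (by nlinarith [hθ.1, m.cast_nonneg (α := ℝ)]))
    refine (norm_sub_le_two_mul_norm_mul_sin_half (hnorm j) hwφ hφ).trans ?_
    rw [hnorm j]
    gcongr
    exact hw'n j
  apply sqrt_integral_sq_le_of_ae_abs_le
  filter_upwards [hsupp] with x hx
  refine (abs_sum_mul_sub_sum_mul_le hLip hα hchord hx).trans_eq ?_
  rw [Fintype.card_fin]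
  ring

/-- paper's Lemma 11. Any one-hidden-layer network
`f'(x) = Σ_j α_j h(⟨w'_j, x⟩)` with `|α_j| ≤ 2C`, `‖w'_j‖₂ ≤ C3` and 1-Lipschitz `h`
admits a diversified counterpart `f` (same `α`, weights `w_j` of the same norms with
pairwise nonobtuse angles at least `θ`) with
`‖f − f'‖_{L²(P)} ≤ 4 m C C1 C3 sin(θ'/2)`, `θ' = min(3mθ, π)`, for any probability
measure `P` supported in the ball of radius `C1`. -/
theorem stmt_18 {d : ℕ} (hd : 2 ≤ d) (θ : ℝ) (hθ : θ ∈ Set.Ioo 0 (Real.pi / 2))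
    (m : ℕ) (hm : m ≤ 2 * (Nat.floor ((Real.pi / 2 - θ) / θ) + 1))
    (C C1 C3 : ℝ) (hC : 0 < C) (hC1 : 0 < C1) (hC3 : 0 < C3)
    (h : ℝ → ℝ) (hLip : LipschitzWith 1 h)
    (P : Measure (EuclideanSpace ℝ (Fin d))) [IsProbabilityMeasure P]
    (hsupp : ∀ᵐ x ∂P, ‖x‖ ≤ C1)
    (α : Fin m → ℝ) (hα : ∀ j, |α j| ≤ 2 * C)
    (w' : Fin m → EuclideanSpace ℝ (Fin d))
    (hw'ne : ∀ j, w' j ≠ 0) (hw'n : ∀ j, ‖w' j‖ ≤ C3) :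
    ∃ w : Fin m → EuclideanSpace ℝ (Fin d),
      (∀ j, w j ≠ 0) ∧
      (∀ j, ‖w j‖ = ‖w' j‖) ∧
      (∀ j k, j ≠ k → θ ≤ rho (w j) (w k)) ∧
      Real.sqrt (∫ x, ((∑ j, α j * h ⟪w j, x⟫) - ∑ j, α j * h ⟪w' j, x⟫) ^ 2 ∂P) ≤
        4 * m * C * C1 * C3 * Real.sin (min (3 * m * θ) Real.pi / 2) :=
  stmt_18_general hd θ hθ m hm C C1 C3 h hLip P hsupp α hα w' hw'ne hw'n
end
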